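/- arXiv:1608.04182 — 2 statements merged into one kernel-verified Lean document; each statement's English description precedes it below -/
import Mathlib

section
/- Let p be a prime, e > 0 with p ∤ e, g a positive multiple of the order of p mod e, and c > 0. Then the multiset of residues (r·p^j mod e) for r ranging over [1, c·p] and j over ℤ/gℤ equals the multiset union of the residues (b(i)·p^j mod e) for i ∈ [1, c(p-1)], j ∈ ℤ/gℤ, and the residues (i·p^{j+1} mod e) for i ∈ [1,c], j ∈ ℤ/gℤ, where b(i) = i + ⌊(i-1)/(p-1)⌋. -/
/-!
Write `p = n + 1`. Removing the multiples of `p` from `[1, cp]` leaves `cn` integers, and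
`i ↦ i + ⌊(i - 1)/n⌋` enumerates them increasingly: after every `n` of them one multiple of `p`
is skipped. Hence `[1, cp]` is, as a multiset, the image of `[1, cn]` under this map plus the image
of `[1, c]` under `i ↦ i p`, and the residue identity follows by mapping `r ↦ r p^j`, since
`(i p) p^j = i p^(j+1)`.
-/

open Finset

/-- The `i`-th positive integer not divisible by `n + 1`. -/
def nthNonMultiple (n i : ℕ) : ℕ := i + (i - 1) / n

lemma strictMono_nthNonMultiple (n : ℕ) : StrictMono (nthNonMultiple n) := fun a b hab => by
  have := Nat.div_le_div_right (c := n) (Nat.sub_le_sub_right hab.le 1)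
  unfold nthNonMultiple
  omega

lemma nthNonMultiple_mem_Icc {n c i : ℕ} (hi : i ∈ Icc 1 (c * n)) :
    nthNonMultiple n i ∈ Icc 1 (c * (n + 1)) := by
  rw [mem_Icc] at hi ⊢
  have hn : 0 < n := Nat.pos_of_mul_pos_left (a := c) (by omega)
  have : (i - 1) / n < c := (Nat.div_lt_iff_lt_mul hn).2 (by omega)
  unfold nthNonMultiple
  rw [mul_add, mul_one]
  generalize (i - 1) / n = q at this ⊢
  omega

lemma not_succ_dvd_nthNonMultiple {n i : ℕ} (hn : 0 < n) (hi : 1 ≤ i) :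
    ¬ n + 1 ∣ nthNonMultiple n i := by
  intro hdvd
  have hdecomp : nthNonMultiple n i = (n + 1) * ((i - 1) / n) + ((i - 1) % n + 1) := by
    have := Nat.div_add_mod (i - 1) n
    unfold nthNonMultiple
    rw [add_mul, one_mul]
    omega
  rw [hdecomp, Nat.dvd_add_right (dvd_mul_right _ _)] at hdvd
  have := Nat.le_of_dvd (Nat.succ_pos _) hdvd
  have := Nat.mod_lt (i - 1) hn
  omega

lemma disjoint_map_nthNonMultiple_map_mul (n c : ℕ) :
    Disjoint ((Icc 1 (c * n)).map ⟨_, (strictMono_nthNonMultiple n).injective⟩)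
      ((Icc 1 c).map ⟨_, mul_left_injective₀ n.succ_ne_zero⟩) := by
  simp only [disjoint_left, mem_map, Function.Embedding.coeFn_mk]
  rintro _ ⟨i, hi, rfl⟩ ⟨k, -, hk⟩
  rw [mem_Icc] at hi
  have hn : 0 < n := Nat.pos_of_mul_pos_left (a := c) (by omega)
  exact not_succ_dvd_nthNonMultiple hn hi.1 ⟨k, by rw [← hk, mul_comm]⟩

lemma Icc_mul_succ_eq_disjUnion (n c : ℕ) :
    Icc 1 (c * (n + 1)) =
      ((Icc 1 (c * n)).map ⟨_, (strictMono_nthNonMultiple n).injective⟩).disjUnion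
        ((Icc 1 c).map ⟨_, mul_left_injective₀ n.succ_ne_zero⟩)
        (disjoint_map_nthNonMultiple_map_mul n c) := by
  refine (eq_of_subset_of_card_le (fun x hx => ?_) ?_).symm
  · simp only [mem_disjUnion, mem_map, Function.Embedding.coeFn_mk] at hx
    rcases hx with ⟨i, hi, rfl⟩ | ⟨k, hk, rfl⟩
    · exact nthNonMultiple_mem_Icc hi
    · rw [mem_Icc] at hk ⊢
      constructor <;> nlinarith
  · simp only [card_disjUnion, card_map, Nat.card_Icc]
    rw [mul_add, mul_one]
    omega

lemma Multiset.map_product_left {α β γ : Type*} (f : α → γ) (s : Multiset α) (t : Multiset β) :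
    s.map f ×ˢ t = (s ×ˢ t).map (Prod.map f id) := by
  induction s using Multiset.induction_on with
  | empty => rfl
  | cons a s ih => simp [ih, Multiset.map_map]

theorem stmt_3_general (p e g c : ℕ) (hp : p.Prime) :
    ((Finset.Icc 1 (c * p) ×ˢ Finset.range g).val.map
        (fun rj => ((rj.1 : ZMod e) * (p : ZMod e) ^ rj.2))) =
    ((Finset.Icc 1 (c * (p - 1)) ×ˢ Finset.range g).val.map
        (fun ij => ((ij.1 + (ij.1 - 1) / (p - 1) : ℕ) : ZMod e) * (p : ZMod e) ^ ij.2)) +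
    ((Finset.Icc 1 c ×ˢ Finset.range g).val.map
        (fun ij => ((ij.1 : ZMod e)) * (p : ZMod e) ^ (ij.2 + 1))) := by
  obtain ⟨n, rfl⟩ : ∃ n, p = n + 1 := ⟨p - 1, (Nat.sub_add_cancel hp.one_le).symm⟩
  simp only [product_val, Icc_mul_succ_eq_disjUnion n c, disjUnion_val, map_val,
    Multiset.add_product, Multiset.map_add, Multiset.map_product_left, Multiset.map_map]
  congr 1
  refine Multiset.map_congr rfl fun ij _ => ?_
  simp only [Function.comp_apply, Prod.map_fst, Prod.map_snd, id, Function.Embedding.coeFn_mk]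
  push_cast
  ring

/-- The multiset of residues `r·p^j mod e` for `r ∈ [1, cp]`, `j ∈ ℤ/gℤ` is the
multiset union of the residues `b(i)·p^j mod e` for `i ∈ [1, c(p-1)]` and
`i·p^{j+1} mod e` for `i ∈ [1, c]`. -/
theorem stmt_3 (p e g c : ℕ) (hp : p.Prime) (he : 0 < e) (hpe : ¬ p ∣ e)
    (hg : 0 < g) (hpg : p ^ g ≡ 1 [MOD e]) (hc : 0 < c) :
    ((Finset.Icc 1 (c * p) ×ˢ Finset.range g).val.map
        (fun rj => ((rj.1 : ZMod e) * (p : ZMod e) ^ rj.2))) =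
    ((Finset.Icc 1 (c * (p - 1)) ×ˢ Finset.range g).val.map
        (fun ij => ((ij.1 + (ij.1 - 1) / (p - 1) : ℕ) : ZMod e) * (p : ZMod e) ^ ij.2)) +
    ((Finset.Icc 1 c ×ˢ Finset.range g).val.map
        (fun ij => ((ij.1 : ZMod e)) * (p : ZMod e) ^ (ij.2 + 1))) :=
  stmt_3_general p e g c hp
end

section
/- With notation as above, let n be a positive common multiple of p-1 and e, write n = d·e, and let b(i) = i + ⌊(i-1)/(p-1)⌋. Then the 𝔽_p[G]-module ⊕_{i=1}^{n} l(b(i)) is isomorphic to k[G]^d (the free k[G]-module of rank d, viewed as an 𝔽_p[G]-module). -/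
/-!
Choose `α ∈ l` whose conjugates `α ^ q ^ m` are `k`-linearly independent (a normal basis).
The generators of `G` act `k`-linearly on every `l(r)`, so the `k`-linear extension
`k[G] → l(r)` of `g ↦ g • α` is `G`-equivariant. Writing `G = {τ^j σ^m}`, the `r`-th component
of the resulting map `k[G] → ⊕_{r < e} l(r)` is `∑_j (η^j)^r y_j` with
`y_j = ∑_m x(τ^j σ^m) α^{q^m}`; it is injective by the invertibility of the Vandermonde matrix
of the `η^j` and the independence of the conjugates of `α`, hence bijective since
`|k[G]| = q^{ef} = |l|^e`.

The Frobenius `x ↦ x^{p^m}` is an isomorphism `l(r) ≅ l(r p^m)`, and `l(r)` depends only on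
`r mod e`, so `l(r) ≅ l(r')` whenever `r` and `r'` lie in the same orbit of multiplication by
`p` on `ℤ/e`. It remains to count orbits. With `n = (p-1)N`, the `b(i)` are the integers in
`[1, pN)` prime to `p`, the multiples of `p` in `[0, pN)` have the same orbits as `[0, N)`, and
`[0, pN) = [0, N) ⊔ [N, N + de)`; so the orbits of the `b(i)` are, with multiplicity, those of
`d` copies of `ℤ/e`.
-/

open DirectSum

namespace Representation

variable {A G V W : Type*} [CommSemiring A] [Group G] [AddCommMonoid V] [AddCommMonoid W]
  [Module A V] [Module A W] {ρ : Representation A G V} {σ : Representation A G W}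

theorem isIntertwiningMap_of_closure_eq_top {s : Set G} (hs : Subgroup.closure s = ⊤)
    {f : V →ₗ[A] W} (h : ∀ g ∈ s, ∀ v, f (ρ g v) = σ g (f v)) :
    IsIntertwiningMap ρ σ f := by
  let H : Subgroup G :=
    { carrier := {g | ∀ v, f (ρ g v) = σ g (f v)}
      one_mem' := by simp
      mul_mem' := fun ha hb v => by
        rw [map_mul, map_mul, Module.End.mul_apply, Module.End.mul_apply, ha, hb]
      inv_mem' := fun {g} hg v => by
        simpa [← Module.End.mul_apply, ← map_mul] using
          congr(σ g⁻¹ $(hg (ρ g⁻¹ v))).symm }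
  exact ⟨fun g => (hs ▸ (Subgroup.closure_le H).mpr h) (Subgroup.mem_top g)⟩

noncomputable def Equiv.asModuleEquiv (φ : ρ.Equiv σ) :
    ρ.asModule ≃ₗ[MonoidAlgebra A G] σ.asModule :=
  LinearEquiv.ofBijective (IntertwiningMap.equivLinearMapAsModule ρ σ φ.toIntertwiningMap)
    (EquivLike.bijective φ)

end Representation

section Generators

variable {G : Type*} [Group G] {σ τ : G} {q : ℕ}

theorem mul_pow_eq_pow_mul_of_conj_eq (hrel : σ * τ * σ⁻¹ = τ ^ q) (j : ℕ) :
    σ * τ ^ j = τ ^ (j * q) * σ := by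
  rw [mul_comm j, pow_mul, ← hrel, conj_pow, inv_mul_cancel_right]

theorem exists_eq_pow_mul_pow [Finite G] (hrel : σ * τ * σ⁻¹ = τ ^ q)
    (hgen : Subgroup.closure {σ, τ} = ⊤) (g : G) : ∃ j m : ℕ, g = τ ^ j * σ ^ m := by
  have hmul : ∀ x ∈ ({σ, τ} : Set G), ∀ y, (∃ j m : ℕ, y = τ ^ j * σ ^ m) →
      ∃ j m : ℕ, x * y = τ ^ j * σ ^ m := by
    rintro x (rfl | rfl) y ⟨j, m, rfl⟩
    · exact ⟨j * q, m + 1, by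
        rw [← mul_assoc, mul_pow_eq_pow_mul_of_conj_eq hrel, mul_assoc, pow_succ']⟩
    · exact ⟨j + 1, m, by rw [← mul_assoc, pow_succ']⟩
  have hpow : ∀ x ∈ ({σ, τ} : Set G), ∀ (n : ℕ) y, (∃ j m : ℕ, y = τ ^ j * σ ^ m) →
      ∃ j m : ℕ, x ^ n * y = τ ^ j * σ ^ m := by
    intro x hx n
    induction n with
    | zero => simp
    | succ n ih => exact fun y hy => by rw [pow_succ', mul_assoc]; exact hmul x hx _ (ih y hy)
  refine Subgroup.closure_induction_left (p := fun y _ => ∃ j m : ℕ, y = τ ^ j * σ ^ m)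
    ⟨0, 0, by simp⟩ (fun x hx y _ hy => hmul x hx y hy) (fun x hx y _ hy => ?_)
    (hgen ▸ Subgroup.mem_top g)
  -- in a finite group `x⁻¹` is a natural power of `x`
  obtain ⟨n, hn⟩ := mem_powers_iff_mem_zpowers.mpr (inv_mem (Subgroup.mem_zpowers x))
  exact hn ▸ hpow x hx n y hy

theorem bijective_pow_mul_pow [Finite G] {e f : ℕ} (hσ : orderOf σ = f) (hτ : orderOf τ = e)
    (hrel : σ * τ * σ⁻¹ = τ ^ q) (hgen : Subgroup.closure {σ, τ} = ⊤)
    (hcard : Nat.card G = e * f) :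
    Function.Bijective fun jm : Fin e × Fin f => τ ^ (jm.1 : ℕ) * σ ^ (jm.2 : ℕ) := by
  subst hσ hτ
  refine Function.Surjective.bijective_of_nat_card_le (fun g => ?_) (by simp [hcard])
  obtain ⟨j, m, rfl⟩ := exists_eq_pow_mul_pow hrel hgen g
  exact ⟨(⟨j % orderOf τ, Nat.mod_lt _ (orderOf_pos τ)⟩,
    ⟨m % orderOf σ, Nat.mod_lt _ (orderOf_pos σ)⟩), by simp [pow_mod_orderOf]⟩

end Generators

theorem eq_zero_of_forall_sum_mul_pow_eq_zero {K : Type*} [Field K] {n : ℕ} {v : Fin n → K}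
    (hv : Function.Injective v) {y : Fin n → K}
    (h : ∀ r : Fin n, ∑ j, y j * v j ^ (r : ℕ) = 0) : y = 0 :=
  Matrix.eq_zero_of_vecMul_eq_zero (Matrix.det_vandermonde_ne_zero_iff.mpr hv) (funext h)

theorem FiniteField.exists_linearIndependent_pow_card_pow (k l : Type*) [Field k] [Fintype k]
    [Field l] [Finite l] [Algebra k l] :
    ∃ α : l, LinearIndependent k fun m : Fin (Module.finrank k l) =>
      α ^ Fintype.card k ^ (m : ℕ) := by
  have : FiniteDimensional k l := Module.Finite.of_finite
  obtain ⟨α, hα⟩ := exists_linearIndependent_algEquiv_apply k l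
  refine ⟨α, ?_⟩
  convert hα.comp _ (FiniteField.bijective_frobeniusAlgEquivOfAlgebraic_pow k l).injective with m
  simp [AlgEquiv.coe_pow, FiniteField.coe_frobeniusAlgEquivOfAlgebraic_iterate]

theorem FiniteField.coprime_orderOf_units {p : ℕ} {l : Type*} [Field l] [Fintype l] [CharP l p]
    (u : lˣ) : p.Coprime (orderOf u) := by
  classical
  obtain ⟨a, hp, hcard⟩ := FiniteField.card l p
  have hdvd : orderOf u ∣ p ^ (a : ℕ) - 1 := by
    rw [← hcard, ← Fintype.card_units]; exact orderOf_dvd_card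
  have hpa : (p ^ (a : ℕ)).Coprime (p ^ (a : ℕ) - 1) :=
    (Nat.coprime_self_sub_right (Nat.one_le_pow _ _ hp.pos)).mpr (Nat.coprime_one_right _)
  exact (hpa.coprime_dvd_left (dvd_pow_self p a.ne_zero)).coprime_dvd_right hdvd

section RegularRepresentation

variable {p : ℕ} {k l G : Type*} [Field k] [Field l] [Algebra k l]
  [Algebra (ZMod p) k] [Algebra (ZMod p) l] [Group G]

noncomputable def orbitLinearCombination (ρ : Representation (ZMod p) G l) (α : l) :
    (G →₀ k) →ₗ[ZMod p] l :=
  (Finsupp.linearCombination k fun g => ρ g α).toAddMonoidHom.toZModLinearMap p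

theorem orbitLinearCombination_mapDomain_mul_left (ρ : Representation (ZMod p) G l) (α : l)
    {g : G} (T : l →ₗ[k] l) (hT : ∀ x, T x = ρ g x) (x : G →₀ k) :
    orbitLinearCombination ρ α (x.mapDomain (g * ·))
      = ρ g (orbitLinearCombination ρ α x) := by
  calc Finsupp.linearCombination k (fun h => ρ h α) (x.mapDomain (g * ·))
      = Finsupp.linearCombination k (T ∘ fun h => ρ h α) x := by
        rw [Finsupp.linearCombination_mapDomain]
        congr 2
        funext h
        simp [hT]
    _ = ρ g (orbitLinearCombination ρ α x) := by
        rw [← Finsupp.apply_linearCombination, hT]; rfl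

theorem isIntertwiningMap_orbitLinearCombination [Fintype k] {σ τ : G}
    (hgen : Subgroup.closure {σ, τ} = ⊤) {κ : Representation (ZMod p) G (G →₀ k)}
    (hκ : ∀ (g : G) (x : G →₀ k), κ g x = x.mapDomain (g * ·))
    {ρ : Representation (ZMod p) G l} {c : l} (hσ : ∀ x, ρ σ x = x ^ Fintype.card k)
    (hτ : ∀ x, ρ τ x = c * x) (α : l) :
    κ.IsIntertwiningMap ρ (orbitLinearCombination ρ α) := by
  refine Representation.isIntertwiningMap_of_closure_eq_top hgen ?_
  rintro g (rfl | rfl) x <;> rw [hκ]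
  · exact orbitLinearCombination_mapDomain_mul_left ρ α
      (FiniteField.frobeniusAlgHom k l).toLinearMap (fun x => (hσ x).symm) x
  · exact orbitLinearCombination_mapDomain_mul_left ρ α (LinearMap.mulLeft k c)
      (fun x => (hτ x).symm) x

theorem Representation.apply_pow_mul_pow {ρ : Representation (ZMod p) G l} {σ τ : G} {q : ℕ}
    {c : l} (hσ : ∀ x, ρ σ x = x ^ q) (hτ : ∀ x, ρ τ x = c * x) (j m : ℕ) (x : l) :
    ρ (τ ^ j * σ ^ m) x = c ^ j * x ^ q ^ m := by
  have hσ' : ⇑(ρ σ) = (· ^ q) := funext hσ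
  have hτ' : ⇑(ρ τ) = (c * ·) := funext hτ
  rw [map_mul, map_pow, map_pow, Module.End.mul_apply, Module.End.pow_apply,
    Module.End.pow_apply, hσ', hτ', pow_iterate, mul_left_iterate]

theorem injective_pi_orbitLinearCombination [Fintype k] [Finite G] {σ τ : G} {e : ℕ}
    (hσ : orderOf σ = Module.finrank k l) (hτ : orderOf τ = e)
    (hrel : σ * τ * σ⁻¹ = τ ^ Fintype.card k) (hgen : Subgroup.closure {σ, τ} = ⊤)
    (hcard : Nat.card G = e * Module.finrank k l) {ζ : l} (hζ : orderOf ζ = e)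
    {ρ : Fin e → Representation (ZMod p) G l} (hρσ : ∀ r x, ρ r σ x = x ^ Fintype.card k)
    (hρτ : ∀ r x, ρ r τ x = ζ ^ (r : ℕ) * x) {α : l}
    (hα : LinearIndependent k fun m : Fin (Module.finrank k l) =>
      α ^ Fintype.card k ^ (m : ℕ)) :
    Function.Injective (LinearMap.pi fun r => orbitLinearCombination (k := k) (ρ r) α) := by
  classical
  have := Fintype.ofFinite G
  let ψ := Equiv.ofBijective _ (bijective_pow_mul_pow hσ hτ hrel hgen hcard)
  rw [injective_iff_map_eq_zero]
  intro x hx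
  let y (j : Fin e) : l := ∑ m, x (ψ (j, m)) • α ^ Fintype.card k ^ (m : ℕ)
  have hsum (r : Fin e) :
      orbitLinearCombination (ρ r) α x = ∑ j, y j * (ζ ^ (j : ℕ)) ^ (r : ℕ) := by
    change Finsupp.linearCombination k _ x = _
    rw [Finsupp.linearCombination_apply, Finsupp.sum_fintype _ _ (by simp), ← ψ.sum_comp,
      Fintype.sum_prod_type]
    refine Finset.sum_congr rfl fun j _ => ?_
    rw [Finset.sum_mul]
    refine Finset.sum_congr rfl fun m _ => ?_
    simp only [ψ, Equiv.ofBijective_apply, Representation.apply_pow_mul_pow (hρσ r) (hρτ r),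
      Algebra.smul_def]
    ring
  have hinj : Function.Injective fun j : Fin e => ζ ^ (j : ℕ) := fun i j h =>
    Fin.ext (pow_injOn_Iio_orderOf (by simp [hζ]) (by simp [hζ]) h)
  have hy : y = 0 := eq_zero_of_forall_sum_mul_pow_eq_zero hinj fun r =>
    (hsum r).symm.trans (congr_fun hx r)
  ext g
  obtain ⟨⟨j, m⟩, rfl⟩ := ψ.surjective g
  exact Fintype.linearIndependent_iff.mp hα _ (congr_fun hy j) m

theorem nonempty_asModule_equiv_directSum [Fintype k] [Finite l] [Finite G] {σ τ : G} {e : ℕ}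
    (hσ : orderOf σ = Module.finrank k l) (hτ : orderOf τ = e)
    (hrel : σ * τ * σ⁻¹ = τ ^ Fintype.card k) (hgen : Subgroup.closure {σ, τ} = ⊤)
    (hcard : Nat.card G = e * Module.finrank k l) {ζ : l} (hζ : orderOf ζ = e)
    {ρ : Fin e → Representation (ZMod p) G l} (hρσ : ∀ r x, ρ r σ x = x ^ Fintype.card k)
    (hρτ : ∀ r x, ρ r τ x = ζ ^ (r : ℕ) * x) {κ : Representation (ZMod p) G (G →₀ k)}
    (hκ : ∀ (g : G) (x : G →₀ k), κ g x = x.mapDomain (g * ·)) :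
    Nonempty (κ.asModule ≃ₗ[MonoidAlgebra (ZMod p) G] ⨁ r, (ρ r).asModule) := by
  obtain ⟨α, hα⟩ := FiniteField.exists_linearIndependent_pow_card_pow k l
  let Φ (r : Fin e) : κ.IntertwiningMap (ρ r) :=
    (orbitLinearCombination (ρ r) α).intertwiningMap_of_isIntertwiningMap κ (ρ r)
      (isIntertwiningMap_orbitLinearCombination hgen hκ (hρσ r) (hρτ r) α).isIntertwining
  let F : κ.asModule →ₗ[MonoidAlgebra (ZMod p) G] ((r : Fin e) → (ρ r).asModule) :=
    LinearMap.pi fun r => Representation.IntertwiningMap.equivLinearMapAsModule κ (ρ r) (Φ r)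
  have hF : Function.Bijective F := by
    have : Finite ((r : Fin e) → (ρ r).asModule) := inferInstanceAs (Finite (Fin e → l))
    refine Function.Injective.bijective_of_nat_card_le
      (injective_pi_orbitLinearCombination hσ hτ hrel hgen hcard hζ hρσ hρτ hα) ?_
    have := Fintype.ofFinite l
    change Nat.card (Fin e → l) ≤ Nat.card (G →₀ k)
    rw [Nat.card_congr Finsupp.equivFunOnFinite, Nat.card_fun, Nat.card_fun, hcard,
      Nat.card_eq_fintype_card (α := l), Module.card_eq_pow_finrank (K := k), ← pow_mul]
    simp [mul_comm]
  exact ⟨(LinearEquiv.ofBijective F hF).trans (DirectSum.linearEquivFunOnFintype _ _ _).symm⟩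

end RegularRepresentation

section FrobeniusTwist

variable {p : ℕ} [Fact p.Prime] {l G : Type*} [Field l] [Finite l] [CharP l p]
  [Algebra (ZMod p) l] [Group G] {σ τ : G} {q : ℕ}

theorem nonempty_equiv_of_frobenius_twist (hgen : Subgroup.closure {σ, τ} = ⊤)
    {ρ₁ ρ₂ : Representation (ZMod p) G l} {c : l} (m : ℕ)
    (hσ₁ : ∀ x, ρ₁ σ x = x ^ q) (hσ₂ : ∀ x, ρ₂ σ x = x ^ q)
    (hτ₁ : ∀ x, ρ₁ τ x = c * x) (hτ₂ : ∀ x, ρ₂ τ x = c ^ p ^ m * x) :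
    Nonempty (ρ₁.Equiv ρ₂) := by
  let F : l ≃ₗ[ZMod p] l := .ofBijective
    ((iterateFrobenius l p m : l →+* l).toAddMonoidHom.toZModLinearMap p)
    (bijective_iterateFrobenius l p m)
  have hFx (x : l) : (F : l →ₗ[ZMod p] l) x = x ^ p ^ m := iterateFrobenius_def p m x
  have hF : ρ₁.IsIntertwiningMap ρ₂ F := by
    refine Representation.isIntertwiningMap_of_closure_eq_top hgen ?_
    rintro g (rfl | rfl) x
    · rw [hσ₁, hσ₂, hFx, hFx, ← pow_mul, ← pow_mul, mul_comm]
    · rw [hτ₁, hτ₂, hFx, hFx, mul_pow]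
  exact ⟨.mk F fun g => LinearMap.ext (hF.isIntertwining g)⟩

theorem nonempty_equiv_of_intCast_eq_mul_pow (hgen : Subgroup.closure {σ, τ} = ⊤) (η : lˣ)
    (ρ : ℤ → Representation (ZMod p) G l) (hρσ : ∀ r x, ρ r σ x = x ^ q)
    (hρτ : ∀ r x, ρ r τ x = ((η ^ r : lˣ) : l) * x) {s t : ℤ} {m : ℕ}
    (h : (t : ZMod (orderOf η)) = s * p ^ m) : Nonempty ((ρ s).Equiv (ρ t)) := by
  have hη : η ^ t = (η ^ s) ^ p ^ m := by
    rw [← zpow_natCast, ← zpow_mul, zpow_eq_zpow_iff_modEq, ← ZMod.intCast_eq_intCast_iff]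
    push_cast
    exact h
  exact nonempty_equiv_of_frobenius_twist hgen m (hρσ s) (hρσ t) (hρτ s)
    (fun x => by rw [hρτ, hη, Units.val_pow_eq_pow_val])

end FrobeniusTwist

section Counting

open Multiset

variable {X : Type*} {c : ℕ → X}

theorem Function.Periodic.map_range_add {T : ℕ} (hc : Function.Periodic c T) (a : ℕ) :
    (range T).map (fun j => c (a + j)) = (range T).map c := by
  induction a with
  | zero => simp
  | succ a ih =>
    obtain _ | T := T
    · rfl
    have hshift : (range (T + 1)).map (fun j => c (a + j))
        = c a ::ₘ (range T).map (fun j => c (a + 1 + j)) := by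
      rw [add_comm T 1, range_add, Multiset.map_add, map_map]
      simp [add_assoc]
    rw [← ih, hshift, range_succ, map_cons, ← hc a]
    congr 2
    ring

/-- `i ↦ i + 1 + i / P` enumerates, in increasing order, the positive integers that are not
multiples of `P + 1`. -/
theorem map_range_succ_mul_eq_add {P : ℕ} (hP : 0 < P) (hc : ∀ m, c ((P + 1) * m) = c m)
    (N : ℕ) :
    (range ((P + 1) * N)).map c
      = (range N).map c + (range (P * N)).map (fun i => c (i + 1 + i / P)) := by
  induction N with
  | zero => simp
  | succ N ih =>
    have hrange : range (P + 1) = 0 ::ₘ (range P).map (1 + ·) := by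
      rw [add_comm, range_add]; simp
    have hblock : (range (P + 1)).map (fun s => c ((P + 1) * N + s))
        = c N ::ₘ (range P).map (fun s => c (P * N + s + 1 + (P * N + s) / P)) := by
      rw [hrange, map_cons, map_map, add_zero, hc]
      congr 1
      refine Multiset.map_congr rfl fun s hs => ?_
      rw [Function.comp_apply, Nat.mul_add_div hP, Nat.div_eq_of_lt (mem_range.mp hs)]
      congr 1
      ring
    rw [mul_add_one, range_add, Multiset.map_add, ih, map_map, Function.comp_def, hblock,
      mul_add_one, range_add (P * N) P, Multiset.map_add, map_map, range_succ, map_cons]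
    simp only [Function.comp_def, add_cons, cons_add]
    ac_rfl

theorem map_range_add_one_add_div_eq {P N T : ℕ} (hP : 0 < P)
    (hc : ∀ m, c ((P + 1) * m) = c m) (hper : Function.Periodic c T) (hT : P * N = T) :
    (range T).map (fun i => c (i + 1 + i / P)) = (range T).map c := by
  have h := map_range_succ_mul_eq_add hP hc N
  rwa [show (P + 1) * N = N + T by rw [← hT]; ring, range_add, Multiset.map_add, map_map,
    Function.comp_def, hper.map_range_add, hT, add_right_inj, eq_comm] at h

theorem Fin.univ_val_map_val (n : ℕ) :
    Finset.univ.val.map (fun i : Fin n => c i) = (range n).map c := by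
  simp [Fin.univ_val_map, List.ofFn_eq_map, Multiset.range, ← List.map_coe_finRange_eq_range,
    Function.comp_def]

theorem exists_equiv_of_map_univ_eq {α β : Type*} [Fintype α] [Fintype β] {u : α → X}
    {v : β → X} (h : Finset.univ.val.map u = Finset.univ.val.map v) :
    ∃ π : α ≃ β, ∀ a, v (π a) = u a := by
  classical
  have hfib (x : X) : Fintype.card {a // u a = x} = Fintype.card {b // v b = x} := by
    simpa [Fintype.card_subtype, Multiset.count_map, eq_comm, Finset.card_def] using
      congr(Multiset.count x $h)
  exact ⟨.ofFiberEquiv fun x => Fintype.equivOfCardEq (hfib x), Equiv.ofFiberEquiv_map _⟩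

end Counting

section CyclotomicCosets

open MulAction

variable {e p : ℕ} (hcop : p.Coprime e)

local notation "Orbits" =>
  orbitRel.Quotient (Subgroup.zpowers (ZMod.unitOfCoprime p hcop)) (ZMod e)

theorem exists_eq_mul_pow_of_mk_eq_mk {x y : ZMod e} (h : (⟦x⟧ : Orbits) = ⟦y⟧) :
    ∃ m : ℕ, y = x * p ^ m := by
  obtain ⟨⟨g, hg⟩, rfl⟩ := Quotient.exact h.symm
  obtain ⟨m, rfl⟩ := mem_powers_iff_mem_zpowers.mpr hg
  exact ⟨m, by simp [Units.smul_def, mul_comm]⟩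

theorem mk_natCast_mul_eq_mk (m : ℕ) :
    (⟦((p * m : ℕ) : ZMod e)⟧ : Orbits) = ⟦(m : ZMod e)⟧ :=
  Quotient.sound ⟨⟨_, Subgroup.mem_zpowers _⟩, by simp [Units.smul_def]⟩

end CyclotomicCosets

theorem exists_equiv_finProd_eq_mul_pow {p e n d : ℕ} (hp : 1 < p) (hcop : p.Coprime e)
    (he : 0 < e) (hn : p - 1 ∣ n) (hnd : n = d * e) :
    ∃ β : Fin n ≃ Fin d × Fin e, ∀ i : Fin n, ∃ m : ℕ,
      (((β i).2 : ℕ) : ZMod e)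
        = (((i : ℕ) + 1 + (i : ℕ) / (p - 1) : ℕ) : ZMod e) * p ^ m := by
  have : NeZero e := ⟨he.ne'⟩
  let c (m : ℕ) :
      MulAction.orbitRel.Quotient (Subgroup.zpowers (ZMod.unitOfCoprime p hcop)) (ZMod e) :=
    ⟦(m : ZMod e)⟧
  have hper : Function.Periodic c e := fun m => by simp [c]
  have hc (m : ℕ) : c ((p - 1 + 1) * m) = c m := by
    rw [Nat.sub_add_cancel hp.le]; exact mk_natCast_mul_eq_mk hcop m
  obtain ⟨N, hN⟩ := hn
  obtain ⟨π, hπ⟩ := exists_equiv_of_map_univ_eq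
    (u := fun i : Fin n => c (i + 1 + i / (p - 1))) (v := fun i : Fin n => c i) <| by
      rw [Fin.univ_val_map_val (c := fun i => c (i + 1 + i / (p - 1))), Fin.univ_val_map_val,
        map_range_add_one_add_div_eq (by omega) hc (hnd ▸ hper.nat_mul d) hN.symm]
  refine ⟨π.trans ((finCongr hnd).trans finProdFinEquiv.symm), fun i => ?_⟩
  refine exists_eq_mul_pow_of_mk_eq_mk hcop ((hπ i).symm.trans ?_)
  simp [c, Fin.modNat]

theorem stmt_11_general (p : ℕ) (hp : p.Prime)
    (k l : Type) [Field k] [Fintype k] [CharP k p] [Field l] [Fintype l] [Algebra k l]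
    [Algebra (ZMod p) l] [Algebra (ZMod p) k]
    (q e f : ℕ) (hq : q = Fintype.card k) (hf : f = Module.finrank k l)
    (G : Type) [Group G] [Fintype G] (σg τg : G)
    (hσ : orderOf σg = f) (hτ : orderOf τg = e)
    (hrel : σg * τg * σg⁻¹ = τg ^ q)
    (hgen : Subgroup.closure ({σg, τg} : Set G) = ⊤)
    (hcard : Nat.card G = e * f)
    (η : lˣ) (hη : orderOf η = e)
    (ρp : ℤ → Representation (ZMod p) G l)
    (hρσ : ∀ (r : ℤ) (x : l), ρp r σg x = x ^ q)
    (hρτ : ∀ (r : ℤ) (x : l), ρp r τg x = ((η ^ r : lˣ) : l) * x)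
    (κ : Representation (ZMod p) G (G →₀ k))
    (hκ : ∀ (g : G) (x : G →₀ k), κ g x = Finsupp.mapDomain (fun h => g * h) x)
    (n d : ℕ) (hn1 : (p - 1) ∣ n) (hnd : n = d * e) :
    Nonempty ((⨁ i : Fin n, (ρp (((i:ℕ) + 1 + ((i:ℕ) + 1 - 1) / (p - 1) : ℕ) : ℤ)).asModule)
      ≃ₗ[MonoidAlgebra (ZMod p) G] (⨁ _ : Fin d, κ.asModule)) := by
  have : Fact p.Prime := ⟨hp⟩
  have : CharP l p := charP_of_injective_algebraMap (algebraMap k l).injective p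
  subst hq hf hη
  obtain ⟨F⟩ := nonempty_asModule_equiv_directSum hσ hτ hrel hgen hcard orderOf_units
    (ρ := fun r => ρp r) (fun r => hρσ r)
    (fun r x => by rw [hρτ, zpow_natCast, Units.val_pow_eq_pow_val]) hκ
  obtain ⟨β, hβ⟩ := exists_equiv_finProd_eq_mul_pow hp.one_lt
    (FiniteField.coprime_orderOf_units η) (orderOf_pos η) hn1 hnd
  let β' := β.trans (Equiv.sigmaEquivProd _ _).symm
  have hpiece (s : Σ _ : Fin d, Fin (orderOf η)) :
      Nonempty ((ρp (((β'.symm s : ℕ) + 1 + ((β'.symm s : ℕ) + 1 - 1) / (p - 1) : ℕ) : ℤ))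
        |>.Equiv (ρp (s.2 : ℕ))) := by
    obtain ⟨m, hm⟩ := hβ (β'.symm s)
    refine nonempty_equiv_of_intCast_eq_mul_pow hgen η ρp hρσ hρτ (m := m) ?_
    simp only [Int.cast_natCast, Nat.add_sub_cancel]
    convert hm
    simp [β']
  exact ⟨(DirectSum.lequivCongrLeft _ β').trans <|
    (DFinsupp.mapRange.linearEquiv fun s => (hpiece s).some.asModuleEquiv).trans <|
    (DirectSum.sigmaLcurryEquiv _).trans <| DFinsupp.mapRange.linearEquiv fun _ => F.symm⟩

/-- For `n` a common multiple of `p-1` and `e`, `n = d·e`, the `𝔽_p[G]`-module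
`⊕_{i=1}^{n} l(b(i))` (with `b(i) = i + ⌊(i-1)/(p-1)⌋`) is isomorphic to `k[G]^d`,
where `k[G]` (the representation `κ` of `G` on `G →₀ k` by left translation) is
viewed as an `𝔽_p[G]`-module. -/
theorem stmt_11 (p : ℕ) (hp : p.Prime)
    (k l : Type) [Field k] [Fintype k] [CharP k p] [Field l] [Fintype l] [Algebra k l]
    [Algebra (ZMod p) l] [Algebra (ZMod p) k]
    (q e f : ℕ) (hq : q = Fintype.card k) (hf : f = Module.finrank k l) (he : 0 < e)
    (G : Type) [Group G] [Fintype G] (σg τg : G)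
    (hσ : orderOf σg = f) (hτ : orderOf τg = e)
    (hrel : σg * τg * σg⁻¹ = τg ^ q)
    (hgen : Subgroup.closure ({σg, τg} : Set G) = ⊤)
    (hcard : Nat.card G = e * f)
    (η : lˣ) (hη : orderOf η = e)
    (ρp : ℤ → Representation (ZMod p) G l)
    (hρσ : ∀ (r : ℤ) (x : l), ρp r σg x = x ^ q)
    (hρτ : ∀ (r : ℤ) (x : l), ρp r τg x = ((η ^ r : lˣ) : l) * x)
    (κ : Representation (ZMod p) G (G →₀ k))
    (hκ : ∀ (g : G) (x : G →₀ k), κ g x = Finsupp.mapDomain (fun h => g * h) x)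
    (n d : ℕ) (hn : 0 < n) (hn1 : (p - 1) ∣ n) (hnd : n = d * e) :
    Nonempty ((⨁ i : Fin n, (ρp (((i:ℕ) + 1 + ((i:ℕ) + 1 - 1) / (p - 1) : ℕ) : ℤ)).asModule)
      ≃ₗ[MonoidAlgebra (ZMod p) G] (⨁ _ : Fin d, κ.asModule)) :=
  stmt_11_general p hp k l q e f hq hf G σg τg hσ hτ hrel hgen hcard η hη ρp hρσ hρτ κ hκ n d hn1
    hnd
end
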